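/- arXiv:2011.01837 — 4 statements merged into one kernel-verified Lean document; each statement's English description precedes it below -/
import Mathlib

section
/- Let D be a finite set of size n partitioned into two disjoint nonempty subsets A and B (A ∪ B = D, A ∩ B = ∅), and let w : D → ℝ be a weight function satisfying w(x) ≥ 0 for all x ∈ D, ∑_{x∈A} w(x) = ∑_{x∈B} w(x) = n/2. Set λ_A := n/(2|A|) and λ_B := n/(2|B|). Then the aggregated worst-case deviation sums satisfy: ∑_{k=1}^{|A|} (max over subsets S ⊆ A with |S| = k of ∑_{x∈S}(w(x) − λ_A)) + ∑_{k=1}^{|B|} (max over subsets S ⊆ B with |S| = k of ∑_{x∈S}(w(x) − λ_B)) = ∑_{{x,y}⊆A, x≠y} max(w(x), w(y)) + ∑_{{x,y}⊆B, x≠y} max(w(x), w(y)) − λ_A·|A|(|A|−1)/2 − λ_B·|B|(|B|−1)/2. In particular, minimizing the pairwise-maximum objective ∑_{{x,y}⊆A} max(w(x),w(y)) + ∑_{{x,y}⊆B} max(w(x),w(y)) over feasible weights minimizes the total worst-case deviation (Theorem 1, Upper Bound on Introduced Noise). -/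
/-- Sum over unordered pairs of distinct elements of `A` of the pairwise maximum of weights,
written as half the sum over ordered pairs of distinct elements. -/
noncomputable def pairMaxSum {α : Type*} [DecidableEq α] (A : Finset α) (w : α → ℝ) : ℝ :=
  (∑ p ∈ A.offDiag, max (w p.1) (w p.2)) / 2

/-- Aggregated worst-case deviation sum
`∑_{k=1}^{|A|} (max over S ⊆ A with |S| = k of ∑_{x∈S} (w x − λ))`. -/
noncomputable def noiseSum {α : Type*} (A : Finset α) (lam : ℝ) (w : α → ℝ) : ℝ :=
  ∑ k ∈ (Finset.Icc 1 A.card).attach,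
    (A.powersetCard k.1).sup'
      (Finset.powersetCard_nonempty.mpr (Finset.mem_Icc.mp k.2).2)
      (fun S => ∑ x ∈ S, (w x - lam))

open Finset

private lemma sup'_sub_const {β : Type*} (s : Finset β) (H : s.Nonempty) (f : β → ℝ) (c : ℝ) :
    s.sup' H (fun x => f x - c) = s.sup' H f - c := by
  apply le_antisymm
  · exact Finset.sup'_le _ _ fun b hb => sub_le_sub_right (Finset.le_sup' f hb) c
  · rw [sub_le_iff_le_add]
    refine Finset.sup'_le _ _ fun b hb => ?_
    have := Finset.le_sup' (fun x => f x - c) hb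
    linarith

/-- top-k sum: sup over `k`-subsets of `A` of the sum of `w`, or `0` if none. -/
noncomputable def topW {α : Type*} (w : α → ℝ) (A : Finset α) (k : ℕ) : ℝ :=
  if h : (A.powersetCard k).Nonempty then
    (A.powersetCard k).sup' h (fun S => ∑ x ∈ S, w x) else 0

private lemma topW_eq {α : Type*} (w : α → ℝ) (A : Finset α) (k : ℕ) (hk : k ≤ A.card) :
    topW w A k = (A.powersetCard k).sup' (Finset.powersetCard_nonempty.mpr hk)
      (fun S => ∑ x ∈ S, w x) := dif_pos _

private lemma sum_Icc_cast (m : ℕ) : ∑ k ∈ Icc 1 m, (k : ℝ) = m * (m + 1) / 2 := by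
  induction m with
  | zero => simp
  | succ n ih =>
    rw [Finset.sum_Icc_succ_top (by omega), ih]
    push_cast
    ring

private lemma noiseSum_eq_topW {α : Type*} (A : Finset α) (lam : ℝ) (w : α → ℝ) :
    noiseSum A lam w
      = (∑ k ∈ Icc 1 A.card, topW w A k) - lam * ((A.card : ℝ) * (A.card + 1) / 2) := by
  unfold noiseSum
  have h1 : ∀ k : {x // x ∈ Icc 1 A.card},
      (A.powersetCard k.1).sup'
        (Finset.powersetCard_nonempty.mpr (Finset.mem_Icc.mp k.2).2)
        (fun S => ∑ x ∈ S, (w x - lam))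
      = topW w A k.1 - (k.1 : ℝ) * lam := by
    intro k
    have hk : k.1 ≤ A.card := (Finset.mem_Icc.mp k.2).2
    rw [topW_eq w A k.1 hk]
    rw [← sup'_sub_const (A.powersetCard k.1) _ (fun S => ∑ x ∈ S, w x) ((k.1 : ℝ) * lam)]
    apply Finset.sup'_congr _ rfl
    intro S hS
    have hcard : S.card = k.1 := (Finset.mem_powersetCard.mp hS).2
    rw [Finset.sum_sub_distrib, Finset.sum_const, hcard, nsmul_eq_mul]
  rw [Finset.sum_congr rfl (fun k _ => h1 k)]
  rw [Finset.sum_attach (Icc 1 A.card) (fun k => topW w A k - (k : ℝ) * lam)]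
  rw [Finset.sum_sub_distrib, ← Finset.sum_mul, sum_Icc_cast]
  ring

private lemma key_sum {α : Type*} [DecidableEq α] (w : α → ℝ) (A : Finset α) (hA : A.Nonempty) :
    ∑ k ∈ Icc 1 A.card, topW w A k = pairMaxSum A w + ∑ x ∈ A, w x := by
  induction A using Finset.strongInduction with
  | _ A ih =>
    obtain ⟨a, haA, hamin⟩ := A.exists_min_image w hA
    by_cases hm : A.card = 1
    · obtain ⟨x, hx⟩ := Finset.card_eq_one.mp hm
      subst hx
      rw [Finset.mem_singleton] at haA
      simp only [Finset.card_singleton, Finset.Icc_self, Finset.sum_singleton]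
      have h1 : topW w {x} 1 = w x := by
        rw [topW_eq w {x} 1 (by simp)]
        have : Finset.powersetCard 1 ({x} : Finset α) = {{x}} := by
          simpa using Finset.powersetCard_self ({x} : Finset α)
        rw [Finset.sup'_congr _ this (fun _ _ => rfl), Finset.sup'_singleton,
          Finset.sum_singleton]
      rw [h1]
      simp [pairMaxSum, Finset.offDiag_singleton]
    · have hc1 : 1 ≤ A.card := Finset.card_pos.mpr hA
      obtain ⟨m, hmeq, hm1⟩ : ∃ m, A.card = m + 1 ∧ 1 ≤ m := ⟨A.card - 1, by omega, by omega⟩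
      set A' := A.erase a with hA'
      have haA' : a ∉ A' := Finset.notMem_erase a A
      have hins : insert a A' = A := Finset.insert_erase haA
      have hA'card : A'.card = m := by
        rw [hA', Finset.card_erase_of_mem haA]; omega
      have hA'ne : A'.Nonempty := Finset.card_pos.mp (by omega)
      have IH := ih A' (Finset.erase_ssubset haA) hA'ne
      -- Claim 1
      have claim1 : ∀ k ∈ Icc 1 m, topW w A k = topW w A' k := by
        intro k hk
        rw [Finset.mem_Icc] at hk
        have hkA : k ≤ A.card := by omega
        have hkA' : k ≤ A'.card := by omega
        rw [topW_eq w A k hkA, topW_eq w A' k hkA']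
        apply le_antisymm
        · refine Finset.sup'_le _ _ fun S hS => ?_
          obtain ⟨hSA, hSk⟩ := Finset.mem_powersetCard.mp hS
          by_cases haS : a ∈ S
          · have hsd : (A \ S).Nonempty := by
              rw [← Finset.card_pos, Finset.card_sdiff_of_subset hSA]; omega
            obtain ⟨y, hy⟩ := hsd
            rw [Finset.mem_sdiff] at hy
            have hyne : y ≠ a := fun h => hy.2 (h ▸ haS)
            set S' := insert y (S.erase a) with hS'
            have hyS : y ∉ S.erase a := fun h => hy.2 (Finset.mem_of_mem_erase h)
            have hS'A' : S' ⊆ A' := by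
              intro z hz
              rcases Finset.mem_insert.mp hz with h | h
              · subst h; exact Finset.mem_erase.mpr ⟨hyne, hy.1⟩
              · exact Finset.mem_erase.mpr ⟨(Finset.mem_erase.mp h).1,
                  hSA (Finset.mem_of_mem_erase h)⟩
            have hS'k : S'.card = k := by
              rw [hS', Finset.card_insert_of_notMem hyS, Finset.card_erase_of_mem haS]
              omega
            have hle : ∑ x ∈ S, w x ≤ ∑ x ∈ S', w x := by
              have e1 : ∑ x ∈ S', w x = w y + ∑ x ∈ S.erase a, w x :=
                Finset.sum_insert hyS
              have e2 : ∑ x ∈ S.erase a, w x + w a = ∑ x ∈ S, w x :=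
                Finset.sum_erase_add S w haS
              have := hamin y hy.1
              linarith
            exact hle.trans (Finset.le_sup' (fun S => ∑ x ∈ S, w x) (Finset.mem_powersetCard.mpr ⟨hS'A', hS'k⟩))
          · refine Finset.le_sup' (fun S => ∑ x ∈ S, w x) (Finset.mem_powersetCard.mpr ⟨?_, hSk⟩)
            intro z hz
            exact Finset.mem_erase.mpr ⟨fun h => haS (h ▸ hz), hSA hz⟩
        · refine Finset.sup'_le _ _ fun S hS => ?_
          exact Finset.le_sup' (fun S => ∑ x ∈ S, w x) (Finset.powersetCard_mono (Finset.erase_subset a A) hS)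
      -- Claim 2
      have claim2 : topW w A A.card = ∑ x ∈ A, w x := by
        rw [topW_eq w A A.card le_rfl]
        have : Finset.powersetCard A.card A = {A} := Finset.powersetCard_self A
        rw [Finset.sup'_congr _ this (fun _ _ => rfl), Finset.sup'_singleton]
      -- Claim 3
      have claim3 : pairMaxSum A w = pairMaxSum A' w + ∑ y ∈ A', w y := by
        have hmax : ∀ y ∈ A', max (w a) (w y) = w y :=
          fun y hy => max_eq_right (hamin y (Finset.mem_of_mem_erase hy))
        have hmax' : ∀ y ∈ A', max (w y) (w a) = w y :=
          fun y hy => max_eq_left (hamin y (Finset.mem_of_mem_erase hy))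
        have hod : A.offDiag = A'.offDiag ∪ {a} ×ˢ A' ∪ A' ×ˢ {a} := by
          rw [← hins]; exact Finset.offDiag_insert haA'
        have hd1 : Disjoint (A'.offDiag ∪ {a} ×ˢ A') (A' ×ˢ {a}) := by
          rw [Finset.disjoint_left]
          rintro ⟨p, q⟩ hp hq
          rw [Finset.mem_product, Finset.mem_singleton] at hq
          rcases Finset.mem_union.mp hp with h | h
          · exact haA' (hq.2 ▸ (Finset.mem_offDiag.mp h).2.1)
          · exact haA' (hq.2 ▸ (Finset.mem_product.mp h).2)
        have hd2 : Disjoint (A'.offDiag) ({a} ×ˢ A') := by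
          rw [Finset.disjoint_left]
          rintro ⟨p, q⟩ hp hq
          rw [Finset.mem_product, Finset.mem_singleton] at hq
          exact haA' (hq.1 ▸ (Finset.mem_offDiag.mp hp).1)
        unfold pairMaxSum
        rw [hod, Finset.sum_union hd1, Finset.sum_union hd2]
        rw [Finset.sum_product, Finset.sum_singleton]
        rw [Finset.sum_product]
        simp only [Finset.sum_singleton]
        rw [Finset.sum_congr rfl hmax, Finset.sum_congr rfl hmax']
        ring
      -- assemble
      rw [hmeq, Finset.sum_Icc_succ_top (by omega), ← hmeq,
        Finset.sum_congr rfl claim1, claim2]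
      rw [hA'card] at IH
      rw [IH, claim3]

private lemma noiseSum_closed {α : Type*} [DecidableEq α] (A : Finset α) (hA : A.Nonempty)
    (lam c : ℝ) (v : α → ℝ) (hv : ∑ x ∈ A, v x = c) (hlam : lam * (A.card : ℝ) = c) :
    noiseSum A lam v = pairMaxSum A v - lam * ((A.card : ℝ) * ((A.card : ℝ) - 1) / 2) := by
  rw [noiseSum_eq_topW, key_sum v A hA, hv]
  have h : lam * ((A.card : ℝ) * ((A.card : ℝ) + 1) / 2)
      = lam * ((A.card : ℝ) * ((A.card : ℝ) - 1) / 2) + lam * (A.card : ℝ) := by ring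
  rw [h, hlam]
  ring

/-- **Theorem 1, Upper Bound on Introduced Noise.** Let `D` of size `n` be
partitioned into disjoint nonempty subsets `A` and `B`, and let `w ≥ 0` satisfy
`∑_{x∈A} w x = ∑_{x∈B} w x = n/2`. With `λ_A = n/(2|A|)` and `λ_B = n/(2|B|)`, the
aggregated worst-case deviation sums over `A` and `B` equal the pairwise-maximum sums minus
`λ_A·|A|(|A|−1)/2 + λ_B·|B|(|B|−1)/2`. In particular, among feasible weights, minimizing the
pairwise-maximum objective minimizes the total worst-case deviation. -/
theorem upper_bound_on_introduced_noise {α : Type*} [DecidableEq α]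
    (D A B : Finset α) (hU : A ∪ B = D) (hI : A ∩ B = ∅)
    (hA : A.Nonempty) (hB : B.Nonempty)
    (n : ℕ) (hn : D.card = n) (w : α → ℝ)
    (hw0 : ∀ x ∈ D, 0 ≤ w x)
    (hwA : ∑ x ∈ A, w x = (n : ℝ) / 2) (hwB : ∑ x ∈ B, w x = (n : ℝ) / 2)
    (lamA lamB : ℝ)
    (hlamA : lamA = (n : ℝ) / (2 * (A.card : ℝ)))
    (hlamB : lamB = (n : ℝ) / (2 * (B.card : ℝ))) :
    (noiseSum A lamA w + noiseSum B lamB w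
      = pairMaxSum A w + pairMaxSum B w
        - lamA * ((A.card : ℝ) * ((A.card : ℝ) - 1) / 2)
        - lamB * ((B.card : ℝ) * ((B.card : ℝ) - 1) / 2))
    ∧ (∀ w' : α → ℝ, (∀ x ∈ D, 0 ≤ w' x) →
        ∑ x ∈ A, w' x = (n : ℝ) / 2 → ∑ x ∈ B, w' x = (n : ℝ) / 2 →
        pairMaxSum A w + pairMaxSum B w ≤ pairMaxSum A w' + pairMaxSum B w' →
        noiseSum A lamA w + noiseSum B lamB w
          ≤ noiseSum A lamA w' + noiseSum B lamB w') := by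
  have hcA : ((A.card : ℝ)) ≠ 0 := Nat.cast_ne_zero.mpr (Finset.card_pos.mpr hA).ne'
  have hcB : ((B.card : ℝ)) ≠ 0 := Nat.cast_ne_zero.mpr (Finset.card_pos.mpr hB).ne'
  have hlA : lamA * (A.card : ℝ) = (n : ℝ) / 2 := by rw [hlamA]; field_simp
  have hlB : lamB * (B.card : ℝ) = (n : ℝ) / 2 := by rw [hlamB]; field_simp
  have eA := noiseSum_closed A hA lamA _ w hwA hlA
  have eB := noiseSum_closed B hB lamB _ w hwB hlB
  constructor
  · rw [eA, eB]; ring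
  · intro w' _ h1 h2 hle
    rw [eA, eB, noiseSum_closed A hA lamA _ w' h1 hlA, noiseSum_closed B hB lamB _ w' h2 hlB]
    linarith
end

section
/- Let A be a finite nonempty set of size m, let w : A → ℝ, and set λ := (∑_{x∈A} w(x))/m. Then ∑_{k=1}^{m} (max over subsets S ⊆ A with |S| = k of ∑_{x∈S}(w(x) − λ)) = ∑_{{x,y}⊆A, x≠y} max(w(x), w(y)) − λ·m(m−1)/2. -/
open Finset

lemma strictMono_fin_nat_le {k : ℕ} {g : Fin k → ℕ} (hg : StrictMono g) :
    ∀ n (hn : n < k), n ≤ g ⟨n, hn⟩ := by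
  intro n
  induction n with
  | zero => intro hn; exact Nat.zero_le _
  | succ n ih =>
      intro hn
      have hn' : n < k := Nat.lt_of_succ_lt hn
      have h1 : g ⟨n, hn'⟩ < g ⟨n + 1, hn⟩ := hg (by simp [Fin.lt_def])
      have h2 := ih hn'
      omega

lemma sum_le_sum_topk {m k : ℕ} (hk : k ≤ m) (v : Fin m → ℝ) (hv : Antitone v)
    (I : Finset (Fin m)) (hI : I.card = k) :
    ∑ i ∈ I, v i ≤ ∑ j : Fin k, v (Fin.castLE hk j) := by
  have hImap : I = univ.map (I.orderEmbOfFin hI).toEmbedding := by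
    ext i
    simp only [mem_map, mem_univ, true_and]
    constructor
    · intro hi
      have : i ∈ Set.range (I.orderEmbOfFin hI) := by
        rw [range_orderEmbOfFin]; exact hi
      obtain ⟨j, hj⟩ := this
      exact ⟨j, hj⟩
    · rintro ⟨j, rfl⟩
      exact orderEmbOfFin_mem I hI j
  rw [hImap, Finset.sum_map]
  apply Finset.sum_le_sum
  intro j _
  apply hv
  have hsm : StrictMono (fun j : Fin k => ((I.orderEmbOfFin hI j : Fin m) : ℕ)) := by
    intro a b hab
    exact (I.orderEmbOfFin hI).strictMono hab
  have := strictMono_fin_nat_le hsm j.1 j.2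
  simpa [Fin.le_def] using this

/-- For a finite nonempty set `A` of size `m`, weights `w : A → ℝ`, and mean
`λ = (∑_{x∈A} w x)/m`, the aggregated maxima of deviation sums over subsets of each
cardinality `k = 1, …, m` equal the sum of pairwise maxima over unordered pairs of distinct
elements (written as half the sum over ordered pairs) minus `λ·m(m−1)/2`. -/
theorem aggregated_max_deviation_eq_pair_max {α : Type*} [DecidableEq α]
    (A : Finset α) (hA : A.Nonempty) (m : ℕ) (hm : A.card = m)
    (w : α → ℝ) (lam : ℝ) (hlam : lam = (∑ x ∈ A, w x) / (m : ℝ)) :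
    ∑ k ∈ (Finset.Icc 1 m).attach,
        (A.powersetCard k.1).sup'
          (Finset.powersetCard_nonempty.mpr
            (by have h := Finset.mem_Icc.mp k.2; omega))
          (fun S => ∑ x ∈ S, (w x - lam))
      = (∑ p ∈ A.offDiag, max (w p.1) (w p.2)) / 2
        - lam * ((m : ℝ) * ((m : ℝ) - 1) / 2) := by
  classical
  have hm0 : 0 < m := by
    have := Finset.card_pos.mpr hA; omega
  -- enumeration of A sorted by decreasing weight
  let e1 : Fin m ≃ {x // x ∈ A} := (finCongr hm.symm).trans A.equivFin.symm
  let σ : Equiv.Perm (Fin m) := Tuple.sort (fun i => -w (e1 i))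
  let e : Fin m → α := fun i => (e1 (σ i) : α)
  have he_inj : Function.Injective e := by
    intro i j hij
    exact σ.injective (e1.injective (Subtype.ext hij))
  have heA : ∀ i, e i ∈ A := fun i => (e1 (σ i)).2
  set v : Fin m → ℝ := fun i => w (e i) with hv_def
  have hv : Antitone v := by
    intro i j hij
    have h := Tuple.monotone_sort (fun i => -w (e1 i)) hij
    simp only [Function.comp_apply] at h
    have h2 : -v i ≤ -v j := h
    linarith
  have himg : Finset.image e univ = A := by
    apply Finset.eq_of_subset_of_card_le
    · intro x hx
      simp only [Finset.mem_image] at hx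
      obtain ⟨i, _, rfl⟩ := hx
      exact heA i
    · rw [Finset.card_image_of_injective _ he_inj, hm, card_univ, Fintype.card_fin]
  have hsumA : ∀ f : α → ℝ, ∑ x ∈ A, f x = ∑ i : Fin m, f (e i) := by
    intro f
    rw [← himg, Finset.sum_image (fun a _ b _ h => he_inj h)]
  -- top-k sets
  set tops : ℕ → Finset (Fin m) := fun k => univ.filter (fun i => i.val < k) with htops
  have htops_eq : ∀ {k : ℕ} (hk : k ≤ m), tops k = univ.map (Fin.castLEEmb hk) := by
    intro k hk
    ext i
    simp only [htops, mem_filter, mem_univ, true_and, mem_map, Fin.castLEEmb, Function.Embedding.coeFn_mk]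
    constructor
    · intro h
      exact ⟨⟨i.val, h⟩, by simp [Fin.castLE]⟩
    · rintro ⟨j, hj, rfl⟩
      exact j.2
  have htops_card : ∀ {k : ℕ}, k ≤ m → (tops k).card = k := by
    intro k hk
    rw [htops_eq hk, card_map, card_univ, Fintype.card_fin]
  have htopsum : ∀ {k : ℕ} (hk : k ≤ m),
      ∑ i ∈ tops k, v i = ∑ j : Fin k, v (Fin.castLE hk j) := by
    intro k hk
    rw [htops_eq hk, Finset.sum_map]
    rfl
  -- per-cardinality value of the sup'
  have hkey : ∀ k, 1 ≤ k → k ≤ m → ∀ (hne : (A.powersetCard k).Nonempty),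
      (A.powersetCard k).sup' hne (fun S => ∑ x ∈ S, (w x - lam))
        = (∑ i ∈ tops k, v i) - (k : ℝ) * lam := by
    intro k hk1 hk hne
    apply le_antisymm
    · apply Finset.sup'_le
      intro S hS
      rw [Finset.mem_powersetCard] at hS
      obtain ⟨hSA, hScard⟩ := hS
      set I : Finset (Fin m) := univ.filter (fun i => e i ∈ S) with hI
      have himgI : I.image e = S := by
        ext x
        simp only [hI, Finset.mem_image, mem_filter, mem_univ, true_and]
        constructor
        · rintro ⟨i, hi, rfl⟩; exact hi
        · intro hx
          have hxA : x ∈ Finset.image e univ := by rw [himg]; exact hSA hx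
          simp only [Finset.mem_image, mem_univ, true_and] at hxA
          obtain ⟨i, rfl⟩ := hxA
          exact ⟨i, hx, rfl⟩
      have hIcard : I.card = k := by
        rw [← hScard, ← himgI, Finset.card_image_of_injective _ he_inj]
      have hsum : ∑ x ∈ S, w x = ∑ i ∈ I, v i := by
        rw [← himgI, Finset.sum_image (fun a _ b _ h => he_inj h)]
      have hle := sum_le_sum_topk hk v hv I hIcard
      rw [Finset.sum_sub_distrib, hsum, Finset.sum_const, hScard, htopsum hk,
        nsmul_eq_mul]
      linarith
    · have hmem : (tops k).image e ∈ A.powersetCard k := by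
        rw [Finset.mem_powersetCard]
        constructor
        · intro x hx
          simp only [Finset.mem_image] at hx
          obtain ⟨i, _, rfl⟩ := hx
          exact heA i
        · rw [Finset.card_image_of_injective _ he_inj, htops_card hk]
      refine le_trans (le_of_eq ?_) (Finset.le_sup' (fun S => ∑ x ∈ S, (w x - lam)) hmem)
      rw [Finset.sum_image (fun a _ b _ h => he_inj h), Finset.sum_sub_distrib,
        Finset.sum_const, htops_card hk, nsmul_eq_mul]
  -- rewrite the attached sum
  have hstep : ∑ k ∈ (Finset.Icc 1 m).attach,
        (A.powersetCard k.1).sup'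
          (Finset.powersetCard_nonempty.mpr
            (by have h := Finset.mem_Icc.mp k.2; omega))
          (fun S => ∑ x ∈ S, (w x - lam))
      = ∑ k ∈ Finset.Icc 1 m, ((∑ i ∈ tops k, v i) - (k : ℝ) * lam) := by
    rw [← Finset.sum_attach (Finset.Icc 1 m) (fun k => (∑ i ∈ tops k, v i) - (k : ℝ) * lam)]
    apply Finset.sum_congr rfl
    intro k _
    have hk := Finset.mem_Icc.mp k.2
    exact hkey k.1 hk.1 hk.2 _
  rw [hstep]
  -- double sum evaluation
  have hdouble : ∑ k ∈ Finset.Icc 1 m, ∑ i ∈ tops k, v i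
      = ∑ i : Fin m, ((m - i.val : ℕ) : ℝ) * v i := by
    have h1 : ∀ k, ∑ i ∈ tops k, v i = ∑ i : Fin m, if i.val < k then v i else 0 := by
      intro k; rw [htops, Finset.sum_filter]
    simp_rw [h1]
    rw [Finset.sum_comm]
    apply Finset.sum_congr rfl
    intro i _
    rw [← Finset.sum_filter]
    have h2 : (Finset.Icc 1 m).filter (fun k => i.val < k) = Finset.Icc (i.val + 1) m := by
      ext k
      simp only [mem_filter, Finset.mem_Icc]
      omega
    rw [h2, Finset.sum_const, Nat.card_Icc, nsmul_eq_mul]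
    congr 2
    omega
  -- pair side
  have hpair : ∑ p ∈ A.offDiag, max (w p.1) (w p.2)
      = ∑ q ∈ (univ : Finset (Fin m)).offDiag, max (v q.1) (v q.2) := by
    have hinj2 : ∀ a ∈ (univ : Finset (Fin m)).offDiag, ∀ b ∈ (univ : Finset (Fin m)).offDiag,
        (e a.1, e a.2) = (e b.1, e b.2) → a = b := by
      rintro ⟨a1, a2⟩ - ⟨b1, b2⟩ - h
      simp only [Prod.mk.injEq] at h
      exact Prod.ext (he_inj h.1) (he_inj h.2)
    have himg2 : ((univ : Finset (Fin m)).offDiag).image (fun q => (e q.1, e q.2)) = A.offDiag := by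
      ext p
      simp only [Finset.mem_image, Finset.mem_offDiag, mem_univ, true_and]
      constructor
      · rintro ⟨⟨i, j⟩, hne, rfl⟩
        exact ⟨heA i, heA j, fun h => hne (he_inj h)⟩
      · rintro ⟨h1, h2, hne⟩
        have h1' : p.1 ∈ Finset.image e univ := by rw [himg]; exact h1
        have h2' : p.2 ∈ Finset.image e univ := by rw [himg]; exact h2
        simp only [Finset.mem_image, mem_univ, true_and] at h1' h2'
        obtain ⟨i, hi⟩ := h1'
        obtain ⟨j, hj⟩ := h2'
        refine ⟨(i, j), ?_, ?_⟩
        · intro h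
          apply hne
          rw [← hi, ← hj]
          exact congrArg e h
        · exact Prod.ext hi hj
    rw [← himg2, Finset.sum_image hinj2]
  have hoff : ∑ q ∈ (univ : Finset (Fin m)).offDiag, max (v q.1) (v q.2)
      = 2 * ∑ i : Fin m, ((m - 1 - i.val : ℕ) : ℝ) * v i := by
    have hsplit : (univ : Finset (Fin m)).offDiag
        = ((univ ×ˢ univ).filter fun q : Fin m × Fin m => q.1 < q.2)
          ∪ ((univ ×ˢ univ).filter fun q : Fin m × Fin m => q.2 < q.1) := by
      ext q
      simp only [Finset.mem_offDiag, mem_filter, Finset.mem_product, mem_univ, true_and,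
        Finset.mem_union]
      constructor
      · intro h
        rcases lt_or_gt_of_ne h with h | h
        · exact Or.inl h
        · exact Or.inr h
      · rintro (h | h)
        · exact ne_of_lt h
        · exact (ne_of_lt h).symm
    have hdisj : Disjoint ((univ ×ˢ univ).filter fun q : Fin m × Fin m => q.1 < q.2)
        ((univ ×ˢ univ).filter fun q : Fin m × Fin m => q.2 < q.1) := by
      rw [Finset.disjoint_left]
      intro q h1 h2
      exact absurd ((mem_filter.mp h1).2.trans (mem_filter.mp h2).2) (lt_irrefl _)
    have hswap : ∑ q ∈ (univ ×ˢ univ).filter (fun q : Fin m × Fin m => q.2 < q.1),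
          max (v q.1) (v q.2)
        = ∑ q ∈ (univ ×ˢ univ).filter (fun q : Fin m × Fin m => q.1 < q.2),
          max (v q.1) (v q.2) := by
      apply Finset.sum_equiv (Equiv.prodComm (Fin m) (Fin m))
      · intro q
        simp [Finset.mem_filter]
      · intro q _
        exact max_comm _ _
    have hmax : ∑ q ∈ (univ ×ˢ univ).filter (fun q : Fin m × Fin m => q.1 < q.2),
          max (v q.1) (v q.2)
        = ∑ q ∈ (univ ×ˢ univ).filter (fun q : Fin m × Fin m => q.1 < q.2), v q.1 :=
      Finset.sum_congr rfl fun q hq => max_eq_left (hv (le_of_lt (mem_filter.mp hq).2))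
    have hcount : ∑ q ∈ (univ ×ˢ univ).filter (fun q : Fin m × Fin m => q.1 < q.2), v q.1
        = ∑ i : Fin m, ((m - 1 - i.val : ℕ) : ℝ) * v i := by
      rw [Finset.sum_filter, Finset.sum_product]
      apply Finset.sum_congr rfl
      intro i _
      rw [← Finset.sum_filter]
      have hIoi : univ.filter (fun j => i < j) = Finset.Ioi i := by
        ext j; simp
      rw [hIoi]
      have hc := Finset.sum_const (b := v i) (s := Finset.Ioi i)
      rw [Fin.card_Ioi, nsmul_eq_mul] at hc
      exact hc
    rw [hsplit, Finset.sum_union hdisj, hswap, hmax, hcount]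
    ring
  -- final algebra
  have hsumv : ∑ i : Fin m, v i = lam * m := by
    have hmne : (m : ℝ) ≠ 0 := Nat.cast_ne_zero.mpr (by omega)
    rw [hlam, div_mul_cancel₀ _ hmne, hsumA w]
  have hgauss : (∑ k ∈ Finset.Icc 1 m, (k : ℝ)) = m * (m + 1) / 2 := by
    have hins : Finset.range (m + 1) = insert 0 (Finset.Icc 1 m) := by
      ext k
      simp only [Finset.mem_range, Finset.mem_insert, Finset.mem_Icc]
      omega
    have h2 := Finset.sum_range_id_mul_two (m + 1)
    rw [hins, Finset.sum_insert (by simp)] at h2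
    simp only [Nat.add_sub_cancel, zero_add] at h2
    have h3 : ((∑ k ∈ Finset.Icc 1 m, k : ℕ) : ℝ) * 2 = (m + 1) * m := by
      exact_mod_cast congrArg (Nat.cast : ℕ → ℝ) h2
    push_cast at h3
    linarith
  have hcoef : ∑ i : Fin m, ((m - i.val : ℕ) : ℝ) * v i
      = (∑ i : Fin m, ((m - 1 - i.val : ℕ) : ℝ) * v i) + ∑ i : Fin m, v i := by
    rw [← Finset.sum_add_distrib]
    apply Finset.sum_congr rfl
    intro i _
    have hi : i.val < m := i.2
    have h4 : (m - i.val : ℕ) = (m - 1 - i.val) + 1 := by omega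
    rw [h4]
    push_cast
    ring
  rw [Finset.sum_sub_distrib, ← Finset.sum_mul, hdouble, hpair, hoff, hgauss, hcoef, hsumv]
  ring
end

section
/- Let D be a finite set of size n, let A ⊆ D be nonempty, and let w : D → ℝ satisfy ∑_{x∈A} w(x) = n/2. Then for every subset C ⊆ D, the noise introduced by weighting is bounded as |(2/n)·∑_{x∈C∩A} w(x) − |C∩A|/|A|| ≤ (2/n)·∑_{x∈A} max(w(x) − n/(2|A|), 0). -/
/-! Subtracting the uniform weight `n / (2|A|)` turns the weighted-minus-unweighted accuracy into
`(2/n)·∑_{C∩A} u` for the centred weights `u`, which sum to zero over `A`. A partial sum of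
numbers with total zero lies between minus and plus the sum of their positive parts, since the
complementary partial sum is its negative. -/

namespace Finset

variable {α : Type*} {A B : Finset α} {u : α → ℝ}

lemma sum_le_sum_max_zero_of_subset (hBA : B ⊆ A) :
    ∑ x ∈ B, u x ≤ ∑ x ∈ A, max (u x) 0 :=
  calc ∑ x ∈ B, u x ≤ ∑ x ∈ B, max (u x) 0 := sum_le_sum fun _ _ => le_max_left _ _
    _ ≤ ∑ x ∈ A, max (u x) 0 :=
      sum_le_sum_of_subset_of_nonneg hBA fun _ _ _ => le_max_right _ _

lemma abs_sum_le_sum_max_zero_of_sum_eq_zero [DecidableEq α] (hBA : B ⊆ A)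
    (hu : ∑ x ∈ A, u x = 0) :
    |∑ x ∈ B, u x| ≤ ∑ x ∈ A, max (u x) 0 := by
  have hcompl : ∑ x ∈ A \ B, u x = -∑ x ∈ B, u x := by
    rw [eq_neg_iff_add_eq_zero, sum_sdiff hBA, hu]
  rw [abs_le]
  constructor
  · linarith [sum_le_sum_max_zero_of_subset (u := u) (sdiff_subset : A \ B ⊆ A)]
  · exact sum_le_sum_max_zero_of_subset hBA

end Finset

theorem weighting_noise_bound_general {α : Type*} [DecidableEq α]
    (D A : Finset α) (hAD : A ⊆ D) (hA : A.Nonempty)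
    (n : ℕ) (hn : D.card = n) (w : α → ℝ)
    (hw : ∑ x ∈ A, w x = (n : ℝ) / 2)
    (C : Finset α) :
    |(2 / (n : ℝ)) * ∑ x ∈ C ∩ A, w x - ((C ∩ A).card : ℝ) / (A.card : ℝ)|
      ≤ (2 / (n : ℝ)) * ∑ x ∈ A, max (w x - (n : ℝ) / (2 * (A.card : ℝ))) 0 := by
  have hA_pos : (0 : ℝ) < A.card := by exact_mod_cast hA.card_pos
  have hn_pos : (0 : ℝ) < n := by
    exact_mod_cast hn ▸ hA.card_pos.trans_le (Finset.card_le_card hAD)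
  set u : α → ℝ := fun x => w x - n / (2 * A.card)
  have hu : ∑ x ∈ A, u x = 0 := by
    simp only [u, Finset.sum_sub_distrib, hw, Finset.sum_const, nsmul_eq_mul]
    field_simp
    ring
  have hcentre : (2 / (n : ℝ)) * ∑ x ∈ C ∩ A, w x - ((C ∩ A).card : ℝ) / A.card
      = (2 / (n : ℝ)) * ∑ x ∈ C ∩ A, u x := by
    simp only [u, Finset.sum_sub_distrib, Finset.sum_const, nsmul_eq_mul]
    field_simp
  rw [hcentre, abs_mul, abs_of_pos (by positivity : (0 : ℝ) < 2 / n)]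
  exact mul_le_mul_of_nonneg_left
    (Finset.abs_sum_le_sum_max_zero_of_sum_eq_zero Finset.inter_subset_right hu) (by positivity)

/-- For a test set `D` of size `n`, a nonempty subset `A ⊆ D`, and weights
with `∑_{x∈A} w x = n / 2`, the noise introduced by weighting is bounded for every `C ⊆ D`:
`|(2/n)·∑_{x∈C∩A} w x − |C∩A|/|A|| ≤ (2/n)·∑_{x∈A} max (w x − n/(2|A|)) 0`. -/
theorem weighting_noise_bound {α : Type*} [DecidableEq α]
    (D A : Finset α) (hAD : A ⊆ D) (hA : A.Nonempty)
    (n : ℕ) (hn : D.card = n) (w : α → ℝ)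
    (hw : ∑ x ∈ A, w x = (n : ℝ) / 2)
    (C : Finset α) (hC : C ⊆ D) :
    |(2 / (n : ℝ)) * ∑ x ∈ C ∩ A, w x - ((C ∩ A).card : ℝ) / (A.card : ℝ)|
      ≤ (2 / (n : ℝ)) * ∑ x ∈ A, max (w x - (n : ℝ) / (2 * (A.card : ℝ))) 0 :=
  weighting_noise_bound_general D A hAD hA n hn w hw C
end

section
/- Let D be a finite set of size n partitioned into disjoint nonempty subsets A and B, with λ_A := n/(2|A|) and λ_B := n/(2|B|). For weight functions w : D → ℝ with w ≥ 0 and ∑_{x∈A} w(x) = ∑_{x∈B} w(x) = n/2, define the pairwise objective P(w) := ∑_{{x,y}⊆A, x≠y} max(w(x), w(y)) + ∑_{{x,y}⊆B, x≠y} max(w(x), w(y)) and the aggregated worst-case noise N(w) := ∑_{k=1}^{|A|} (max over S ⊆ A, |S| = k of ∑_{x∈S}(w(x) − λ_A)) + ∑_{k=1}^{|B|} (max over S ⊆ B, |S| = k of ∑_{x∈S}(w(x) − λ_B)). If w and w' both satisfy the constraints and P(w) ≤ P(w'), then N(w) ≤ N(w'). -/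
/-!
Add the elements of a group in increasing order of weight. Adding a heaviest element `a` to `s`
raises the pair objective by `|s| w(a)`, as `a` is the maximum of each new pair, and raises every
best `(k+1)`-subset sum by `w(a) - λ`, as a best `(k+1)`-subset of `insert a s` is `a` together
with a best `k`-subset of `s`. Hence `N_A(w) = P_A(w) + ∑_A w - λ |A|(|A|+1)/2`, and for feasible
weights the last two terms do not depend on `w`.
-/

section

open Finset

variable {α β : Type*}

section TopSum

variable [AddCommMonoid β] [LinearOrder β]

noncomputable def topSum (s : Finset α) (f : α → β) (k : ℕ) : β :=
  if h : k ≤ s.card then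
    (s.powersetCard k).sup' (powersetCard_nonempty.mpr h) fun S => ∑ x ∈ S, f x
  else 0

theorem topSum_zero (s : Finset α) (f : α → β) : topSum s f 0 = 0 := by
  simp [topSum]

theorem topSum_insert_succ [DecidableEq α] [IsOrderedAddMonoid β] {s : Finset α} {a : α}
    {f : α → β} (ha : a ∉ s) (hmax : ∀ x ∈ s, f x ≤ f a) {k : ℕ} (hk : k ≤ s.card) :
    topSum (insert a s) f (k + 1) = f a + topSum s f k := by
  have hk' : k + 1 ≤ (insert a s).card := by rw [card_insert_of_notMem ha]; omega
  rw [topSum, topSum, dif_pos hk', dif_pos hk]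
  apply le_antisymm
  · refine sup'_le _ _ fun S hS => ?_
    obtain ⟨hSsub, hScard⟩ := mem_powersetCard.mp hS
    obtain ⟨y, hyS, hya, hsub⟩ : ∃ y ∈ S, f y ≤ f a ∧ S.erase y ⊆ s := by
      by_cases haS : a ∈ S
      · refine ⟨a, haS, le_rfl, fun x hx => ?_⟩
        obtain ⟨hxa, hxS⟩ := mem_erase.mp hx
        exact (mem_insert.mp (hSsub hxS)).resolve_left hxa
      · have hS : S ⊆ s := fun x hx =>
          (mem_insert.mp (hSsub hx)).resolve_left (ne_of_mem_of_not_mem hx haS)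
        obtain ⟨y, hy⟩ := card_pos.mp (by omega : 0 < S.card)
        exact ⟨y, hy, hmax y (hS hy), (erase_subset y S).trans hS⟩
    have hmem : S.erase y ∈ s.powersetCard k :=
      mem_powersetCard.mpr ⟨hsub, by rw [card_erase_of_mem hyS]; omega⟩
    rw [← add_sum_erase S f hyS]
    exact add_le_add hya (le_sup' (fun S => ∑ x ∈ S, f x) hmem)
  · obtain ⟨T, hT, hTsum⟩ := exists_mem_eq_sup' (powersetCard_nonempty.mpr hk)
      fun S => ∑ x ∈ S, f x
    obtain ⟨hTsub, hTcard⟩ := mem_powersetCard.mp hT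
    have haT : a ∉ T := fun h => ha (hTsub h)
    have hmem : insert a T ∈ (insert a s).powersetCard (k + 1) :=
      mem_powersetCard.mpr
        ⟨insert_subset_insert a hTsub, by rw [card_insert_of_notMem haT, hTcard]⟩
    rw [hTsum, ← sum_insert haT]
    exact le_sup' (fun S => ∑ x ∈ S, f x) hmem

end TopSum

theorem noiseSum_eq_sum_topSum (A : Finset α) (lam : ℝ) (w : α → ℝ) :
    noiseSum A lam w = ∑ k ∈ range A.card, topSum A (fun x => w x - lam) (k + 1) := by
  calc noiseSum A lam w
      = ∑ k ∈ (Icc 1 A.card).attach, topSum A (fun x => w x - lam) k :=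
        sum_congr rfl fun k _ => by rw [topSum, dif_pos (mem_Icc.mp k.2).2]
    _ = ∑ k ∈ Ico 1 (A.card + 1), topSum A (fun x => w x - lam) k := sum_attach _ _
    _ = ∑ k ∈ range A.card, topSum A (fun x => w x - lam) (k + 1) := by
        simp only [sum_Ico_eq_sum_range, Nat.add_sub_cancel, add_comm 1]

variable [DecidableEq α]

theorem noiseSum_insert {s : Finset α} {a : α} (lam : ℝ) {w : α → ℝ} (ha : a ∉ s)
    (hmax : ∀ x ∈ s, w x ≤ w a) :
    noiseSum (insert a s) lam w = noiseSum s lam w + (s.card + 1) * (w a - lam) := by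
  have hmax' : ∀ x ∈ s, w x - lam ≤ w a - lam := fun x hx => sub_le_sub_right (hmax x hx) lam
  have hk : ∀ k ∈ range (s.card + 1), k ≤ s.card := fun k hk =>
    Nat.lt_succ_iff.mp (mem_range.mp hk)
  rw [noiseSum_eq_sum_topSum, noiseSum_eq_sum_topSum, card_insert_of_notMem ha,
    sum_congr rfl fun k hk' => topSum_insert_succ ha hmax' (hk k hk'),
    sum_add_distrib, sum_range_succ' (topSum s _), topSum_zero, sum_const, card_range,
    nsmul_eq_mul]
  push_cast
  ring

theorem pairMaxSum_insert {s : Finset α} {a : α} {w : α → ℝ} (ha : a ∉ s)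
    (hmax : ∀ x ∈ s, w x ≤ w a) :
    pairMaxSum (insert a s) w = pairMaxSum s w + s.card * w a := by
  have hdisj₁ : Disjoint s.offDiag ({a} ×ˢ s) := by grind [disjoint_left]
  have hdisj₂ : Disjoint (s.offDiag ∪ {a} ×ˢ s) (s ×ˢ {a}) := by grind [disjoint_left]
  have hleft : ∑ p ∈ {a} ×ˢ s, max (w p.1) (w p.2) = s.card * w a := by
    rw [sum_product, sum_singleton, sum_congr rfl fun y hy => max_eq_left (hmax y hy),
      sum_const, nsmul_eq_mul]
  have hright : ∑ p ∈ s ×ˢ {a}, max (w p.1) (w p.2) = s.card * w a := by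
    rw [sum_product, sum_congr rfl fun y hy => by rw [sum_singleton, max_eq_right (hmax y hy)],
      sum_const, nsmul_eq_mul]
  rw [pairMaxSum, pairMaxSum, offDiag_insert ha, sum_union hdisj₂, sum_union hdisj₁, hleft,
    hright]
  ring

theorem noiseSum_eq_pairMaxSum_add_sum (A : Finset α) (lam : ℝ) (w : α → ℝ) :
    noiseSum A lam w =
      pairMaxSum A w + ∑ x ∈ A, w x - lam * (A.card * (A.card + 1) / 2) := by
  induction A using Finset.induction_on_max_value w with
  | empty => simp [noiseSum_eq_sum_topSum, pairMaxSum]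
  | insert a s ha hmax ih =>
    rw [noiseSum_insert lam ha hmax, pairMaxSum_insert ha hmax, sum_insert ha,
      card_insert_of_notMem ha, ih]
    push_cast
    ring

end

theorem pair_objective_monotone_noise_general {α : Type*} [DecidableEq α]
    (A B : Finset α)
    (n : ℕ)
    (lamA lamB : ℝ)
    (w w' : α → ℝ)
    (hwA : ∑ x ∈ A, w x = (n : ℝ) / 2) (hwB : ∑ x ∈ B, w x = (n : ℝ) / 2)
    (hwA' : ∑ x ∈ A, w' x = (n : ℝ) / 2) (hwB' : ∑ x ∈ B, w' x = (n : ℝ) / 2)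
    (hP : pairMaxSum A w + pairMaxSum B w ≤ pairMaxSum A w' + pairMaxSum B w') :
    noiseSum A lamA w + noiseSum B lamB w ≤ noiseSum A lamA w' + noiseSum B lamB w' := by
  simp only [noiseSum_eq_pairMaxSum_add_sum, hwA, hwB, hwA', hwB']
  linarith

/-- Let `D` of size `n` be partitioned into disjoint nonempty subsets `A`
and `B`, with `λ_A = n/(2|A|)` and `λ_B = n/(2|B|)`. For feasible weights (nonnegative, each
group summing to `n/2`), define the pairwise objective
`P w = pairMaxSum A w + pairMaxSum B w` and the aggregated worst-case noise
`N w = noiseSum A λ_A w + noiseSum B λ_B w`. If `w` and `w'` are both feasible and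
`P w ≤ P w'`, then `N w ≤ N w'`. -/
theorem pair_objective_monotone_noise {α : Type*} [DecidableEq α]
    (D A B : Finset α) (hU : A ∪ B = D) (hI : A ∩ B = ∅)
    (hA : A.Nonempty) (hB : B.Nonempty)
    (n : ℕ) (hn : D.card = n)
    (lamA lamB : ℝ)
    (hlamA : lamA = (n : ℝ) / (2 * (A.card : ℝ)))
    (hlamB : lamB = (n : ℝ) / (2 * (B.card : ℝ)))
    (w w' : α → ℝ)
    (hw0 : ∀ x ∈ D, 0 ≤ w x)
    (hwA : ∑ x ∈ A, w x = (n : ℝ) / 2) (hwB : ∑ x ∈ B, w x = (n : ℝ) / 2)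
    (hw0' : ∀ x ∈ D, 0 ≤ w' x)
    (hwA' : ∑ x ∈ A, w' x = (n : ℝ) / 2) (hwB' : ∑ x ∈ B, w' x = (n : ℝ) / 2)
    (hP : pairMaxSum A w + pairMaxSum B w ≤ pairMaxSum A w' + pairMaxSum B w') :
    noiseSum A lamA w + noiseSum B lamB w ≤ noiseSum A lamA w' + noiseSum B lamB w' :=
  pair_objective_monotone_noise_general A B n lamA lamB w w' hwA hwB hwA' hwB' hP
end
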